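/- Let P_1, P_2 be CPTs from finite set X to finite set Y and π_1, π_2 probability mass functions on X with induced marginals ρ_1, ρ_2 on Y. Then d_V(ρ_1, ρ_2) ≤ (1 + d_V(π_1, π_2)) · d_V⁺(P_1, P_2) + d_V(π_1, π_2) · max{d⁺(P_1), d⁺(P_2)}. -/

import Mathlib

/-!
Pass through the intermediate marginal `π₁ P₂` with the triangle inequality. Since `π₁` is a
probability vector, `d_V(π₁ P₁, π₁ P₂)` is at most the average of the row distances, hence at most
`d_V⁺(P₁, P₂)`. For `d_V(π₁ P₂, π₂ P₂)` pair `μ = π₁ - π₂` with the sign pattern `s` of the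
difference of the marginals: `2 d_V = ∑ₓ μₓ fₓ` with `fₓ = ∑_y s_y P₂ₓ(y)`, whose oscillation
is at most `2 d⁺(P₂)`. As `∑ μ = 0`, the values of `f` may be centred at the middle of their range
first, which gives the contraction `d_V(π₁ P₂, π₂ P₂) ≤ d_V(π₁, π₂) d⁺(P₂)`.
-/

noncomputable def dV {Z : Type*} [Fintype Z] (p q : Z → ℝ) : ℝ :=
  (1/2) * ∑ z, |p z - q z|

def IsPMF {Z : Type*} [Fintype Z] (p : Z → ℝ) : Prop :=
  (∀ z, 0 ≤ p z) ∧ ∑ z, p z = 1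

noncomputable def diam {X Y : Type*} [Fintype X] [Fintype Y]
    (P : X → Y → ℝ) : ℝ :=
  ⨆ x : X, ⨆ x' : X, dV (P x) (P x')

noncomputable def dVplus {X Y : Type*} [Fintype X] [Fintype Y]
    (P Q : X → Y → ℝ) : ℝ :=
  ⨆ x : X, dV (P x) (Q x)

open Finset

/-- The marginal `ρ = π P`. -/
def mix {X Y : Type*} [Fintype X] (π : X → ℝ) (P : X → Y → ℝ) : Y → ℝ :=
  fun y => ∑ x, π x * P x y

section TotalVariation

variable {Z : Type*} [Fintype Z]

lemma dV_nonneg (p q : Z → ℝ) : 0 ≤ dV p q := by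
  unfold dV
  positivity

lemma dV_triangle (p q r : Z → ℝ) : dV p r ≤ dV p q + dV q r := by
  unfold dV
  rw [← mul_add, ← sum_add_distrib]
  gcongr with z
  exact abs_sub_le _ _ _

end TotalVariation

section Kernels

variable {X Y : Type*} [Fintype X] [Fintype Y]

lemma dV_le_diam (P : X → Y → ℝ) (x x' : X) : dV (P x) (P x') ≤ diam P :=
  (le_ciSup (Set.finite_range _).bddAbove x').trans
    (le_ciSup (f := fun x => ⨆ x', dV (P x) (P x')) (Set.finite_range _).bddAbove x)

lemma dV_le_dVplus (P Q : X → Y → ℝ) (x : X) : dV (P x) (Q x) ≤ dVplus P Q :=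
  le_ciSup (f := fun x => dV (P x) (Q x)) (Set.finite_range _).bddAbove x

lemma dVplus_nonneg (P Q : X → Y → ℝ) : 0 ≤ dVplus P Q :=
  Real.iSup_nonneg fun x => dV_nonneg (P x) (Q x)

lemma dV_mix_le_sum {π : X → ℝ} (hπ : ∀ x, 0 ≤ π x) (P Q : X → Y → ℝ) :
    dV (mix π P) (mix π Q) ≤ ∑ x, π x * dV (P x) (Q x) := by
  have hrow : ∀ y, |mix π P y - mix π Q y| ≤ ∑ x, π x * |P x y - Q x y| := fun y => by
    simp only [mix, ← sum_sub_distrib, ← mul_sub]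
    refine (abs_sum_le_sum_abs _ _).trans_eq (sum_congr rfl fun x _ => ?_)
    rw [abs_mul, abs_of_nonneg (hπ x)]
  calc dV (mix π P) (mix π Q) ≤ 1 / 2 * ∑ y, ∑ x, π x * |P x y - Q x y| := by
        unfold dV
        gcongr with y
        exact hrow y
    _ = ∑ x, π x * dV (P x) (Q x) := by
        simp only [dV, sum_comm (γ := Y), mul_sum]
        exact sum_congr rfl fun x _ => sum_congr rfl fun y _ => by ring

lemma dV_mix_le_dVplus {π : X → ℝ} (hπ : IsPMF π) (P Q : X → Y → ℝ) :
    dV (mix π P) (mix π Q) ≤ dVplus P Q :=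
  calc dV (mix π P) (mix π Q) ≤ ∑ x, π x * dV (P x) (Q x) := dV_mix_le_sum hπ.1 P Q
    _ ≤ ∑ x, π x * dVplus P Q := by
        gcongr with x
        · exact hπ.1 x
        · exact dV_le_dVplus P Q x
    _ = dVplus P Q := by rw [← sum_mul, hπ.2, one_mul]

end Kernels

lemma abs_sum_mul_le_of_sum_eq_zero {X 𝕜 : Type*} [Fintype X] [Field 𝕜] [LinearOrder 𝕜]
    [IsStrictOrderedRing 𝕜] {μ f : X → 𝕜} {K : 𝕜}
    (hμ : ∑ x, μ x = 0) (hf : ∀ x x', f x - f x' ≤ K) :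
    |∑ x, μ x * f x| ≤ (∑ x, |μ x|) / 2 * K := by
  cases isEmpty_or_nonempty X
  · simp
  obtain ⟨x₀, hx₀⟩ := Finite.exists_min f
  set c := f x₀ + K / 2 with hc
  have hcentre : ∀ x, |f x - c| ≤ K / 2 := fun x => abs_le.2
    ⟨by linarith [hx₀ x, hf x₀ x, hc], by linarith [hf x x₀, hc]⟩
  have hshift : ∑ x, μ x * f x = ∑ x, μ x * (f x - c) := by
    simp only [mul_sub, sum_sub_distrib, ← sum_mul, hμ, zero_mul, sub_zero]
  calc |∑ x, μ x * f x| ≤ ∑ x, |μ x| * |f x - c| := by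
        rw [hshift]
        exact (abs_sum_le_sum_abs _ _).trans_eq (sum_congr rfl fun x _ => abs_mul _ _)
    _ ≤ ∑ x, |μ x| * (K / 2) := by gcongr with x; exact hcentre x
    _ = (∑ x, |μ x|) / 2 * K := by rw [← sum_mul]; ring

lemma sign_mul_le_abs {α : Type*} [Ring α] [LinearOrder α] [IsStrictOrderedRing α] (a b : α) :
    (SignType.sign a : α) * b ≤ |b| := by
  rcases SignType.sign a with _ | _ | _ <;> simp [le_abs_self, neg_le_abs]

lemma dV_mix_le_dV_mul_diam {X Y : Type*} [Fintype X] [Fintype Y] {π π' : X → ℝ}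
    (hsum : ∑ x, π x = ∑ x, π' x) (P : X → Y → ℝ) :
    dV (mix π P) (mix π' P) ≤ dV π π' * diam P := by
  set s : Y → ℝ := fun y => SignType.sign (mix π P y - mix π' P y)
  set f : X → ℝ := fun x => ∑ y, s y * P x y
  have hμ : ∑ x, (π x - π' x) = 0 := by rw [sum_sub_distrib, hsum, sub_self]
  have hosc : ∀ x x', f x - f x' ≤ 2 * diam P := fun x x' =>
    calc f x - f x' = ∑ y, s y * (P x y - P x' y) := by
          simp only [f, ← sum_sub_distrib, mul_sub]
      _ ≤ ∑ y, |P x y - P x' y| := sum_le_sum fun y _ => sign_mul_le_abs _ _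
      _ = 2 * dV (P x) (P x') := by unfold dV; ring
      _ ≤ 2 * diam P := by linarith [dV_le_diam P x x']
  have hdiff : ∀ y, mix π P y - mix π' P y = ∑ x, (π x - π' x) * P x y := fun y => by
    simp only [mix, ← sum_sub_distrib, sub_mul]
  have hpair : ∑ y, |mix π P y - mix π' P y| = ∑ x, (π x - π' x) * f x :=
    calc ∑ y, |mix π P y - mix π' P y| = ∑ y, s y * (mix π P y - mix π' P y) := by
          simp only [s, sign_mul_self]
      _ = ∑ x, (π x - π' x) * f x := by
          simp only [hdiff, f, mul_sum]
          rw [sum_comm]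
          exact sum_congr rfl fun x _ => sum_congr rfl fun y _ => by ring
  calc dV (mix π P) (mix π' P) = 1 / 2 * ∑ x, (π x - π' x) * f x := by rw [dV, hpair]
    _ ≤ 1 / 2 * |∑ x, (π x - π' x) * f x| := by gcongr; exact le_abs_self _
    _ ≤ 1 / 2 * ((∑ x, |π x - π' x|) / 2 * (2 * diam P)) := by
        gcongr
        exact abs_sum_mul_le_of_sum_eq_zero hμ hosc
    _ = dV π π' * diam P := by rw [dV]; ring

theorem stmt16_general {X Y : Type*} [Fintype X] [Fintype Y]
    (P1 P2 : X → Y → ℝ)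
    (π1 π2 : X → ℝ) (hπ1 : IsPMF π1) (hπ2 : IsPMF π2) :
    dV (fun y => ∑ x, π1 x * P1 x y) (fun y => ∑ x, π2 x * P2 x y) ≤
      (1 + dV π1 π2) * dVplus P1 P2 + dV π1 π2 * max (diam P1) (diam P2) := by
  calc dV (mix π1 P1) (mix π2 P2)
        ≤ dV (mix π1 P1) (mix π1 P2) + dV (mix π1 P2) (mix π2 P2) := dV_triangle _ _ _
    _ ≤ dVplus P1 P2 + dV π1 π2 * diam P2 :=
        add_le_add (dV_mix_le_dVplus hπ1 P1 P2)
          (dV_mix_le_dV_mul_diam (hπ1.2.trans hπ2.2.symm) P2)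
    _ ≤ (1 + dV π1 π2) * dVplus P1 P2 + dV π1 π2 * max (diam P1) (diam P2) := by
        have ht := dV_nonneg π1 π2
        linarith [mul_nonneg ht (dVplus_nonneg P1 P2),
          mul_le_mul_of_nonneg_left (le_max_right (diam P1) (diam P2)) ht]

theorem stmt16 {X Y : Type*} [Fintype X] [Fintype Y] [Nonempty X]
    (P1 P2 : X → Y → ℝ) (hP1 : ∀ x, IsPMF (P1 x)) (hP2 : ∀ x, IsPMF (P2 x))
    (π1 π2 : X → ℝ) (hπ1 : IsPMF π1) (hπ2 : IsPMF π2) :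
    dV (fun y => ∑ x, π1 x * P1 x y) (fun y => ∑ x, π2 x * P2 x y) ≤
      (1 + dV π1 π2) * dVplus P1 P2 + dV π1 π2 * max (diam P1) (diam P2) :=
  stmt16_general P1 P2 π1 π2 hπ1 hπ2
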